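/- The Busy Beaver language at level 2 is L_BB(2) = {1111}: the only word computed by a halting Turing machine with at most 2 states whose number of ones attains BB(2) = 4 is the word '1111'. -/

import Mathlib

/-- Head movement directions. -/
inductive Dir : Type
  | left | stay | right

/-- Displacement of the head for each direction. -/
def Dir.move : Dir → ℤ
  | .left => -1
  | .stay => 0
  | .right => 1

/-- A configuration of a Turing machine with state type `Q`: current state,
head position and the two-way infinite binary tape. -/
structure Cfg (Q : Type) where
  state : Q
  head : ℤ
  tape : ℤ → Bool

/-- One step of the machine with partial transition function `f`
(`none` if the machine halts, i.e. `f` is undefined on the current pair). -/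
def stepTM {Q : Type} (f : Q × Bool → Option (Q × Bool × Dir)) (c : Cfg Q) :
    Option (Cfg Q) :=
  (f (c.state, c.tape c.head)).map fun qbd =>
    ⟨qbd.1, c.head + qbd.2.2.move, Function.update c.tape c.head qbd.2.1⟩

/-- Running `t` steps (returns `none` if the machine halts strictly before `t` steps). -/
def stepsTM {Q : Type} (f : Q × Bool → Option (Q × Bool × Dir)) :
    ℕ → Cfg Q → Option (Cfg Q)
  | 0, c => some c
  | t + 1, c => (stepTM f c).bind (stepsTM f t)

/-- Initial configuration: initial state `q0`, head at `0`, all-zero tape. -/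
def initCfg {Q : Type} (q0 : Q) : Cfg Q := ⟨q0, 0, fun _ => false⟩

/-- The machine is halted in configuration `c`: the transition function is
undefined on the current (state, symbol) pair. -/
def Halted {Q : Type} (f : Q × Bool → Option (Q × Bool × Dir)) (c : Cfg Q) : Prop :=
  f (c.state, c.tape c.head) = none

/-- `w` is the tape contents from the leftmost 1 to the rightmost 1
(the empty word if the tape contains no 1). -/
def TapeWord (tape : ℤ → Bool) (w : List Bool) : Prop :=
  ∃ i : ℤ,
    (∀ k : ℕ, k < w.length → w.getD k false = tape (i + k)) ∧
    (∀ j : ℤ, tape j = true → i ≤ j ∧ j < i + w.length) ∧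
    (w ≠ [] → w.getD 0 false = true ∧ w.getLastD false = true)

/-- The machine with transition function `f` and initial state `q0`, started on
the all-zero tape, halts after exactly `t` steps computing the word `w`. -/
def Computes {Q : Type} (f : Q × Bool → Option (Q × Bool × Dir)) (q0 : Q)
    (w : List Bool) (t : ℕ) : Prop :=
  ∃ c : Cfg Q, stepsTM f t (initCfg q0) = some c ∧ Halted f c ∧ TapeWord c.tape w

/-! ### Auxiliary infrastructure -/

deriving instance DecidableEq for Dir
instance : Fintype Dir := ⟨{.left, .stay, .right}, by intro x; cases x <;> decide⟩

namespace BB2Aux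

variable {Q : Type} {f : Q × Bool → Option (Q × Bool × Dir)}

theorem steps_add (a b : ℕ) (c : Cfg Q) :
    stepsTM f (a + b) c = (stepsTM f a c).bind (stepsTM f b) := by
  induction a generalizing c with
  | zero => simp [stepsTM]
  | succ n ih =>
      have : n + 1 + b = (n + b) + 1 := by omega
      rw [this]
      show (stepTM f c).bind (stepsTM f (n + b)) = ((stepTM f c).bind (stepsTM f n)).bind _
      cases stepTM f c with
      | none => rfl
      | some c' => simpa using ih c'

theorem steps_succ' (t : ℕ) (c : Cfg Q) :
    stepsTM f (t + 1) c = (stepsTM f t c).bind (stepTM f) := by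
  rw [steps_add t 1]
  congr 1
  funext c'
  show (stepTM f c').bind (stepsTM f 0) = _
  cases stepTM f c' <;> rfl

theorem steps_isSome_of_le {a b : ℕ} (hab : a ≤ b) {c : Cfg Q}
    (h : (stepsTM f b c).isSome) : (stepsTM f a c).isSome := by
  obtain ⟨k, rfl⟩ := Nat.exists_eq_add_of_le hab
  rw [steps_add] at h
  cases hs : stepsTM f a c with
  | none => rw [hs] at h; simp at h
  | some _ => simp

/-- Agreement of two configurations up to offset `δ`, on the half-line `[m, ∞)`. -/
def AgreeGE (δ m : ℤ) (c c' : Cfg Q) : Prop :=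
  c'.state = c.state ∧ c'.head = c.head + δ ∧
    ∀ x : ℤ, m ≤ x → c'.tape (x + δ) = c.tape x

/-- Agreement of two configurations up to offset `δ`, on the half-line `(-∞, M]`. -/
def AgreeLE (δ M : ℤ) (c c' : Cfg Q) : Prop :=
  c'.state = c.state ∧ c'.head = c.head + δ ∧
    ∀ x : ℤ, x ≤ M → c'.tape (x + δ) = c.tape x

theorem stepTM_eq_some_iff {c d : Cfg Q} :
    stepTM f c = some d ↔ ∃ qsd, f (c.state, c.tape c.head) = some qsd ∧
      d = ⟨qsd.1, c.head + qsd.2.2.move, Function.update c.tape c.head qsd.2.1⟩ := by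
  unfold stepTM
  cases f (c.state, c.tape c.head) <;> simp [eq_comm]

theorem step_agreeGE {δ m : ℤ} {c c' d : Cfg Q} (h : AgreeGE δ m c c')
    (hh : m ≤ c.head) (hs : stepTM f c = some d) :
    ∃ d', stepTM f c' = some d' ∧ AgreeGE δ m d d' := by
  obtain ⟨hq, hhd, ht⟩ := h
  obtain ⟨⟨q, s, dir⟩, hf, rfl⟩ := stepTM_eq_some_iff.mp hs
  have hread : c'.tape c'.head = c.tape c.head := by
    rw [hhd]; exact ht c.head hh
  refine ⟨⟨q, c'.head + dir.move, Function.update c'.tape c'.head s⟩, ?_, ?_, ?_, ?_⟩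
  · unfold stepTM
    rw [hq, hread, hf]; rfl
  · rfl
  · simp only [hhd]; ring
  · intro x hx
    simp only [hhd, Function.update_apply]
    by_cases hxc : x = c.head
    · subst hxc; simp
    · have : ¬ (x + δ = c.head + δ) := by omega
      simp [hxc, this, ht x hx]

theorem step_agreeLE {δ M : ℤ} {c c' d : Cfg Q} (h : AgreeLE δ M c c')
    (hh : c.head ≤ M) (hs : stepTM f c = some d) :
    ∃ d', stepTM f c' = some d' ∧ AgreeLE δ M d d' := by
  obtain ⟨hq, hhd, ht⟩ := h
  obtain ⟨⟨q, s, dir⟩, hf, rfl⟩ := stepTM_eq_some_iff.mp hs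
  have hread : c'.tape c'.head = c.tape c.head := by
    rw [hhd]; exact ht c.head hh
  refine ⟨⟨q, c'.head + dir.move, Function.update c'.tape c'.head s⟩, ?_, ?_, ?_, ?_⟩
  · unfold stepTM
    rw [hq, hread, hf]; rfl
  · rfl
  · simp only [hhd]; ring
  · intro x hx
    simp only [hhd, Function.update_apply]
    by_cases hxc : x = c.head
    · subst hxc; simp
    · have : ¬ (x + δ = c.head + δ) := by omega
      simp [hxc, this, ht x hx]

theorem run_agreeGE {δ m : ℤ} (e : ℕ → Cfg Q) (p : ℕ)
    (he : ∀ i < p, stepTM f (e i) = some (e (i + 1)))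
    (hg : ∀ i < p, m ≤ (e i).head) :
    ∀ c' : Cfg Q, AgreeGE δ m (e 0) c' →
      ∃ d', stepsTM f p c' = some d' ∧ AgreeGE δ m (e p) d' := by
  induction p generalizing e with
  | zero => intro c' h; exact ⟨c', rfl, h⟩
  | succ n ih =>
      intro c' h
      obtain ⟨d', hd', hA⟩ := step_agreeGE h (hg 0 (Nat.succ_pos n))
        (he 0 (Nat.succ_pos n))
      obtain ⟨d'', hd'', hA''⟩ := ih (fun i => e (i + 1))
        (fun i hi => he (i + 1) (by omega)) (fun i hi => hg (i + 1) (by omega)) d' hA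
      refine ⟨d'', ?_, hA''⟩
      show (stepTM f c').bind (stepsTM f n) = some d''
      rw [hd']; exact hd''

theorem run_agreeLE {δ M : ℤ} (e : ℕ → Cfg Q) (p : ℕ)
    (he : ∀ i < p, stepTM f (e i) = some (e (i + 1)))
    (hg : ∀ i < p, (e i).head ≤ M) :
    ∀ c' : Cfg Q, AgreeLE δ M (e 0) c' →
      ∃ d', stepsTM f p c' = some d' ∧ AgreeLE δ M (e p) d' := by
  induction p generalizing e with
  | zero => intro c' h; exact ⟨c', rfl, h⟩
  | succ n ih =>
      intro c' h
      obtain ⟨d', hd', hA⟩ := step_agreeLE h (hg 0 (Nat.succ_pos n))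
        (he 0 (Nat.succ_pos n))
      obtain ⟨d'', hd'', hA''⟩ := ih (fun i => e (i + 1))
        (fun i hi => he (i + 1) (by omega)) (fun i hi => hg (i + 1) (by omega)) d' hA
      refine ⟨d'', ?_, hA''⟩
      show (stepTM f c').bind (stepsTM f n) = some d''
      rw [hd']; exact hd''

/-- Translated-cycle certificate (rightward / stationary): never halts. -/
theorem nonhalt_ge {δ m : ℤ} (hδ : 0 ≤ δ) (e : ℕ → Cfg Q) (p : ℕ) (hp : 0 < p)
    (he : ∀ i < p, stepTM f (e i) = some (e (i + 1)))
    (hg : ∀ i < p, m ≤ (e i).head)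
    (hA : AgreeGE δ m (e 0) (e p)) :
    ∀ s : ℕ, (stepsTM f s (e 0)).isSome := by
  have key : ∀ k : ℕ, ∃ ck, stepsTM f (k * p) (e 0) = some ck ∧
      AgreeGE (k * δ) m (e 0) ck := by
    intro k
    induction k with
    | zero =>
        refine ⟨e 0, by simp [stepsTM], rfl, by push_cast; ring, fun x _ => ?_⟩
        norm_num
    | succ n ih =>
        obtain ⟨cn, hcn, hAn⟩ := ih
        obtain ⟨d', hd', hA'⟩ := run_agreeGE (δ := n * δ) e p he hg cn hAn
        refine ⟨d', ?_, ?_, ?_, ?_⟩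
        · rw [show (n + 1) * p = n * p + p by ring, steps_add, hcn]
          exact hd'
        · rw [hA'.1, hA.1]
        · rw [hA'.2.1, hA.2.1]; push_cast; ring
        · intro x hx
          have h1 : d'.tape ((x + δ) + n * δ) = (e p).tape (x + δ) :=
            hA'.2.2 (x + δ) (by omega)
          have h2 : (e p).tape (x + δ) = (e 0).tape x := hA.2.2 x hx
          push_cast
          rw [show x + ((n : ℤ) + 1) * δ = x + δ + n * δ by ring, h1, h2]
  intro s
  obtain ⟨ck, hck, _⟩ := key s
  have hsp : s ≤ s * p := Nat.le_mul_of_pos_right s hp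
  exact steps_isSome_of_le hsp (by rw [hck]; simp)

/-- Translated-cycle certificate (leftward / stationary): never halts. -/
theorem nonhalt_le {δ M : ℤ} (hδ : δ ≤ 0) (e : ℕ → Cfg Q) (p : ℕ) (hp : 0 < p)
    (he : ∀ i < p, stepTM f (e i) = some (e (i + 1)))
    (hg : ∀ i < p, (e i).head ≤ M)
    (hA : AgreeLE δ M (e 0) (e p)) :
    ∀ s : ℕ, (stepsTM f s (e 0)).isSome := by
  have key : ∀ k : ℕ, ∃ ck, stepsTM f (k * p) (e 0) = some ck ∧
      AgreeLE (k * δ) M (e 0) ck := by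
    intro k
    induction k with
    | zero =>
        refine ⟨e 0, by simp [stepsTM], rfl, by push_cast; ring, fun x _ => ?_⟩
        norm_num
    | succ n ih =>
        obtain ⟨cn, hcn, hAn⟩ := ih
        obtain ⟨d', hd', hA'⟩ := run_agreeLE (δ := n * δ) e p he hg cn hAn
        refine ⟨d', ?_, ?_, ?_, ?_⟩
        · rw [show (n + 1) * p = n * p + p by ring, steps_add, hcn]
          exact hd'
        · rw [hA'.1, hA.1]
        · rw [hA'.2.1, hA.2.1]; push_cast; ring
        · intro x hx
          have h1 : d'.tape ((x + δ) + n * δ) = (e p).tape (x + δ) :=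
            hA'.2.2 (x + δ) (by omega)
          have h2 : (e p).tape (x + δ) = (e 0).tape x := hA.2.2 x hx
          push_cast
          rw [show x + ((n : ℤ) + 1) * δ = x + δ + n * δ by ring, h1, h2]
  intro s
  obtain ⟨ck, hck, _⟩ := key s
  have hsp : s ≤ s * p := Nat.le_mul_of_pos_right s hp
  exact steps_isSome_of_le hsp (by rw [hck]; simp)

end BB2Aux

namespace BB2Aux

/-! ### Concrete simulation for 2-state machines -/

abbrev T2 := Fin 2 × Bool × Dir
abbrev Tbl := Option T2 × Option T2 × Option T2 × Option T2

def tf (b : Tbl) : Fin 2 × Bool → Option T2 := fun x =>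
  if x.1 = 0 then (if x.2 then b.2.1 else b.1) else (if x.2 then b.2.2.2 else b.2.2.1)

theorem tf_eq (f : Fin 2 × Bool → Option T2) :
    f = tf (f (0, false), f (0, true), f (1, false), f (1, true)) := by
  funext x
  obtain ⟨q, s⟩ := x
  fin_cases q <;> cases s <;> simp [tf]

structure SC where
  q : Fin 2
  h : ℤ
  o : Finset ℤ
deriving DecidableEq

def SC.tape (c : SC) : ℤ → Bool := fun x => decide (x ∈ c.o)

def toCfg (c : SC) : Cfg (Fin 2) := ⟨c.q, c.h, c.tape⟩

def stepS (b : Tbl) (c : SC) : Option SC :=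
  match tf b (c.q, c.tape c.h) with
  | none => none
  | some (q, s, d) => some ⟨q, c.h + d.move, if s then insert c.h c.o else c.o.erase c.h⟩

def initS : SC := ⟨0, 0, ∅⟩

def trajS (b : Tbl) : ℕ → Option SC
  | 0 => some initS
  | t + 1 => (trajS b t).bind (stepS b)

theorem toCfg_initS : toCfg initS = initCfg (0 : Fin 2) := by
  unfold toCfg initS initCfg
  congr 1

theorem step_corr (b : Tbl) (c : SC) :
    stepTM (tf b) (toCfg c) = (stepS b c).map toCfg := by
  unfold stepTM stepS
  have : (toCfg c).tape (toCfg c).head = c.tape c.h := rfl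
  rw [show ((toCfg c).state, (toCfg c).tape (toCfg c).head) = (c.q, c.tape c.h) from rfl]
  cases hf : tf b (c.q, c.tape c.h) with
  | none => rfl
  | some qsd =>
      obtain ⟨q, s, d⟩ := qsd
      simp only [Option.map_some]
      congr 1
      unfold toCfg
      congr 1
      funext x
      simp only [SC.tape, Function.update_apply]
      by_cases hx : x = c.h
      · subst hx
        cases s <;> simp
      · cases s <;> simp [hx, Finset.mem_insert, Finset.mem_erase]

theorem traj_corr (b : Tbl) (t : ℕ) :
    stepsTM (tf b) t (initCfg (0 : Fin 2)) = (trajS b t).map toCfg := by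
  induction t with
  | zero => simp [stepsTM, trajS, toCfg_initS]
  | succ n ih =>
      rw [steps_succ', ih]
      show _ = ((trajS b n).bind (stepS b)).map toCfg
      cases trajS b n with
      | none => rfl
      | some c =>
          simp only [Option.map_some, Option.bind_some, step_corr]

theorem trajS_mono {b : Tbl} {t : ℕ} (h : (trajS b t).isSome) :
    ∀ s ≤ t, (trajS b s).isSome := by
  intro s hs
  induction t with
  | zero => simpa [Nat.le_zero.mp hs] using h
  | succ n ih =>
      rcases Nat.lt_or_ge s (n + 1) with hlt | hge
      · apply ih _ (by omega)
        show (trajS b n).isSome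
        by_contra hc
        rw [Option.not_isSome_iff_eq_none] at hc
        unfold trajS at h
        rw [hc] at h
        simp at h
      · have : s = n + 1 := by omega
        subst this; exact h

end BB2Aux

namespace BB2Aux

/-! ### The checker -/

def allSome (b : Tbl) : Bool :=
  b.1.isSome && b.2.1.isSome && b.2.2.1.isSome && b.2.2.2.isSome

def goodOnes (o : Finset ℤ) : Bool :=
  decide (o.card ≤ 3) || decide (∃ a ∈ o, o = {a, a + 1, a + 2, a + 3})

def haltGood (b : Tbl) : Bool :=
  (List.range 6).any fun h =>
    match trajS b h with
    | some c => (tf b (c.q, c.tape c.h)).isNone && goodOnes c.o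
    | none => false

def segHeads (b : Tbl) (t1 t2 : ℕ) : List ℤ :=
  (List.range (t2 + 1 - t1)).filterMap fun i => (trajS b (t1 + i)).map SC.h

def certOK (b : Tbl) (t1 t2 : ℕ) : Bool :=
  match trajS b t1, trajS b t2 with
  | some c1, some c2 =>
      decide (c1.q = c2.q) &&
      (let δ := c2.h - c1.h
       let U := c1.o ∪ c2.o.image (fun y => y - δ)
       if 0 ≤ δ then
         (segHeads b t1 t2).any fun m =>
           ((segHeads b t1 t2).all fun x => decide (m ≤ x)) &&
           decide (∀ x ∈ U, m ≤ x → ((x + δ ∈ c2.o) ↔ x ∈ c1.o))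
       else
         (segHeads b t1 t2).any fun M =>
           ((segHeads b t1 t2).all fun x => decide (x ≤ M)) &&
           decide (∀ x ∈ U, x ≤ M → ((x + δ ∈ c2.o) ↔ x ∈ c1.o)))
  | _, _ => false

def certSearch (b : Tbl) : Bool :=
  (List.range 6).any fun t2 => (List.range t2).any fun t1 => certOK b t1 t2

def check (b : Tbl) : Bool := allSome b || haltGood b || certSearch b

set_option maxRecDepth 100000 in
set_option maxHeartbeats 4000000 in
theorem check_all : ∀ a b c d : Option T2, check (a, b, c, d) = true := by decide

end BB2Aux

namespace BB2Aux

/-! ### From the halting tape to the word -/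

theorem getLastD_eq (l : List Bool) (h : l ≠ []) :
    ∀ d d' : Bool, l.getLastD d = l.getD (l.length - 1) d' := by
  induction l with
  | nil => simp at h
  | cons a t ih =>
      intro d d'
      cases t with
      | nil => simp
      | cons b t' =>
          rw [List.getLastD_cons, ih (by simp) a d']
          have : (a :: b :: t').length - 1 = ((b :: t').length - 1) + 1 := by simp
          rw [this, List.getD_cons_succ]

theorem count_le_card (o : Finset ℤ) (tape : ℤ → Bool)
    (hto : ∀ x, tape x = true → x ∈ o) :
    ∀ (w : List Bool) (i : ℤ),
      (∀ k : ℕ, k < w.length → w.getD k false = tape (i + k)) →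
      w.count true ≤ (o.filter fun x => i ≤ x ∧ x < i + w.length).card := by
  intro w
  induction w with
  | nil => intro i _; simp
  | cons b tl ih =>
      intro i hw
      have hb : b = tape i := by
        have := hw 0 (by simp)
        simpa using this
      have htl : ∀ k : ℕ, k < tl.length → tl.getD k false = tape ((i + 1) + k) := by
        intro k hk
        have := hw (k + 1) (by simp only [List.length_cons]; omega)
        rw [List.getD_cons_succ] at this
        rw [this]
        congr 1
        push_cast
        ring
      have IH := ih (i + 1) htl
      have hsub : (o.filter fun x => i + 1 ≤ x ∧ x < (i + 1) + tl.length) ⊆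
          (o.filter fun x => i ≤ x ∧ x < i + (b :: tl).length) := by
        intro x hx
        simp only [Finset.mem_filter, List.length_cons] at hx ⊢
        push_cast
        refine ⟨hx.1, by omega, by omega⟩
      cases b with
      | false =>
          have hcnt : (false :: tl).count true = tl.count true := by simp
          rw [hcnt]
          exact le_trans IH (Finset.card_le_card hsub)
      | true =>
          have hio : i ∈ o := hto i hb.symm
          have hiF : i ∈ (o.filter fun x => i ≤ x ∧ x < i + (true :: tl).length) := by
            simp only [Finset.mem_filter, List.length_cons]
            refine ⟨hio, le_refl i, by push_cast; omega⟩
          have hsub' : (o.filter fun x => i + 1 ≤ x ∧ x < (i + 1) + tl.length) ⊆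
              (o.filter fun x => i ≤ x ∧ x < i + (true :: tl).length).erase i := by
            intro x hx
            have hxF := hsub hx
            have hxne : x ≠ i := by
              simp only [Finset.mem_filter] at hx
              omega
            exact Finset.mem_erase.mpr ⟨hxne, hxF⟩
          have hcard := Finset.card_le_card hsub'
          rw [Finset.card_erase_of_mem hiF] at hcard
          have hpos : 0 < (o.filter fun x => i ≤ x ∧ x < i + (true :: tl).length).card :=
            Finset.card_pos.mpr ⟨i, hiF⟩
          have hcnt : (true :: tl).count true = tl.count true + 1 := by simp
          rw [hcnt]
          omega

theorem word_from_halt (o : Finset ℤ) (w : List Bool)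
    (hw : TapeWord (fun x => decide (x ∈ o)) w)
    (hc : w.count true = 4) (hg : goodOnes o = true) :
    w = List.replicate 4 true := by
  obtain ⟨i, h1, h2, h3⟩ := hw
  have hwne : w ≠ [] := by
    intro h; rw [h] at hc; simp at hc
  rw [goodOnes, Bool.or_eq_true, decide_eq_true_eq, decide_eq_true_eq] at hg
  rcases hg with hg | hg
  · -- card ≤ 3 : contradiction with count = 4
    exfalso
    have hle := count_le_card o (fun x => decide (x ∈ o)) (fun x hx => by simpa using hx) w i h1
    have : (o.filter fun x => i ≤ x ∧ x < i + w.length).card ≤ o.card :=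
      Finset.card_le_card (Finset.filter_subset _ _)
    omega
  · obtain ⟨a, ha, ho⟩ := hg
    have hmem : ∀ x : ℤ, x ∈ o ↔ (x = a ∨ x = a + 1 ∨ x = a + 2 ∨ x = a + 3) := by
      intro x
      rw [ho]
      simp [Finset.mem_insert, Finset.mem_singleton]
    have hlen0 : 0 < w.length := List.length_pos_iff.mpr hwne
    obtain ⟨hfirst, hlast⟩ := h3 hwne
    -- i = a
    have hti : decide (i ∈ o) = true := by
      have := h1 0 hlen0
      rw [hfirst] at this
      simpa using this.symm
    have hia : a ≤ i := by
      rw [decide_eq_true_eq, hmem] at hti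
      omega
    have hai : i ≤ a ∧ (a : ℤ) < i + w.length := h2 a (by simp [hmem])
    have hieq : i = a := le_antisymm hai.1 hia
    -- length = 4
    have htlast : decide ((i + ((w.length : ℤ) - 1)) ∈ o) = true := by
      have hk : w.length - 1 < w.length := by omega
      have := h1 (w.length - 1) hk
      rw [← getLastD_eq w hwne false false, hlast] at this
      have hcast : ((w.length - 1 : ℕ) : ℤ) = (w.length : ℤ) - 1 := by
        push_cast [Nat.cast_sub (by omega : 1 ≤ w.length)]
        ring
      rw [hcast] at this
      simpa using this.symm
    have hlen4 : w.length = 4 := by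
      rw [decide_eq_true_eq, hmem] at htlast
      have h2a3 : i ≤ a + 3 ∧ (a + 3 : ℤ) < i + w.length := h2 (a + 3) (by simp [hmem])
      omega
    -- all entries true
    apply List.ext_getElem (by simp [hlen4])
    intro n hn hn'
    have hn4 : n < 4 := by omega
    have := h1 n (by omega)
    rw [← List.getD_eq_getElem w false (by omega : n < w.length), this]
    simp only [List.getElem_replicate, decide_eq_true_eq, hmem]
    omega
end BB2Aux

namespace BB2Aux

/-! ### Soundness of the checker -/

theorem halted_stepTM {Q : Type} {f : Q × Bool → Option (Q × Bool × Dir)} {c : Cfg Q}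
    (hh : Halted f c) : stepTM f c = none := by
  unfold stepTM
  rw [hh]
  rfl

theorem allSome_case {b : Tbl} (h : allSome b = true) (x : Fin 2 × Bool) :
    (tf b x).isSome := by
  obtain ⟨q, s⟩ := x
  simp only [allSome, Bool.and_eq_true] at h
  fin_cases q <;> cases s <;> simp [tf] <;> tauto

theorem halt_case {b : Tbl} (hH : haltGood b = true) {w : List Bool} {t : ℕ} {c : Cfg (Fin 2)}
    (hs : stepsTM (tf b) t (initCfg 0) = some c) (hh : Halted (tf b) c)
    (hcnt : w.count true = 4) (htw : TapeWord c.tape w) :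
    w = List.replicate 4 true := by
  rw [haltGood, List.any_eq_true] at hH
  obtain ⟨h, _, hP⟩ := hH
  cases htr : trajS b h with
  | none => rw [htr] at hP; simp at hP
  | some sc =>
      rw [htr] at hP
      simp only [Bool.and_eq_true, Option.isNone_iff_eq_none] at hP
      obtain ⟨hhalt2, hgood⟩ := hP
      have hcorr : stepsTM (tf b) h (initCfg (0 : Fin 2)) = some (toCfg sc) := by
        rw [traj_corr, htr]; rfl
      -- the halting time is unique: t = h
      have hth : t = h := by
        by_contra hne
        rcases Nat.lt_or_ge t h with hlt | hge
        · -- machine would be halted strictly before h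
          have : stepsTM (tf b) h (initCfg (0 : Fin 2)) = none := by
            have hsplit : h = t + (h - t) := by omega
            rw [hsplit, steps_add, hs]
            have : stepsTM (tf b) (h - t) c = none := by
              have hpos : h - t = (h - t - 1) + 1 := by omega
              rw [hpos]
              show (stepTM (tf b) c).bind _ = none
              rw [halted_stepTM hh]
              rfl
            simpa using this
          rw [this] at hcorr; exact Option.some_ne_none _ hcorr.symm
        · have hlt : h < t := by omega
          have : stepsTM (tf b) t (initCfg (0 : Fin 2)) = none := by
            have hsplit : t = h + (t - h) := by omega
            rw [hsplit, steps_add, hcorr]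
            have hstep : stepTM (tf b) (toCfg sc) = none := by
              unfold stepTM
              rw [show ((toCfg sc).state, (toCfg sc).tape (toCfg sc).head)
                  = (sc.q, sc.tape sc.h) from rfl, hhalt2]
              rfl
            have : stepsTM (tf b) (t - h) (toCfg sc) = none := by
              have hpos : t - h = (t - h - 1) + 1 := by omega
              rw [hpos]
              show (stepTM (tf b) (toCfg sc)).bind _ = none
              rw [hstep]
              rfl
            simpa using this
          rw [this] at hs; exact Option.some_ne_none _ hs.symm
      subst hth
      rw [hs] at hcorr
      have hceq : c = toCfg sc := Option.some_injective _ hcorr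
      subst hceq
      exact word_from_halt sc.o w htw hcnt hgood

theorem mem_segHeads {b : Tbl} {t1 t2 i : ℕ} {sc : SC} (hi : t1 + i ≤ t2)
    (htr : trajS b (t1 + i) = some sc) : sc.h ∈ segHeads b t1 t2 := by
  rw [segHeads, List.mem_filterMap]
  exact ⟨i, List.mem_range.mpr (by omega), by rw [htr]; rfl⟩

theorem cert_case {b : Tbl} (hC : certSearch b = true) :
    ∀ s : ℕ, (stepsTM (tf b) s (initCfg (0 : Fin 2))).isSome := by
  rw [certSearch, List.any_eq_true] at hC
  obtain ⟨t2, _, hC⟩ := hC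
  rw [List.any_eq_true] at hC
  obtain ⟨t1, ht1mem, hC⟩ := hC
  have ht12 : t1 < t2 := List.mem_range.mp ht1mem
  cases htr1 : trajS b t1 with
  | none => rw [certOK, htr1] at hC; simp at hC
  | some c1 =>
  cases htr2 : trajS b t2 with
  | none => rw [certOK, htr1, htr2] at hC; simp at hC
  | some c2 =>
  rw [certOK, htr1, htr2] at hC
  simp only [Bool.and_eq_true, decide_eq_true_eq] at hC
  obtain ⟨hq, hC⟩ := hC
  -- the trajectory is defined up to t2
  have hdef : ∀ i, t1 + i ≤ t2 → (trajS b (t1 + i)).isSome := by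
    intro i hi
    exact trajS_mono (by rw [htr2]; rfl) _ hi
  set p : ℕ := t2 - t1 with hp
  have hppos : 0 < p := by omega
  -- the run as a function
  set e : ℕ → Cfg (Fin 2) := fun i => toCfg ((trajS b (t1 + i)).getD initS) with he_def
  have he_eq : ∀ i, t1 + i ≤ t2 → ∀ sc, trajS b (t1 + i) = some sc → e i = toCfg sc := by
    intro i hi sc hsc
    rw [he_def]
    simp [hsc]
  have he0 : e 0 = toCfg c1 := he_eq 0 (by omega) c1 (by rw [Nat.add_zero]; exact htr1)
  have hep : e p = toCfg c2 := he_eq p (by omega) c2 (by rw [show t1 + p = t2 by omega]; exact htr2)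
  have hstep : ∀ i < p, stepTM (tf b) (e i) = some (e (i + 1)) := by
    intro i hi
    obtain ⟨sci, hsci⟩ := Option.isSome_iff_exists.mp (hdef i (by omega))
    obtain ⟨sci', hsci'⟩ := Option.isSome_iff_exists.mp (hdef (i + 1) (by omega))
    have hstepS : stepS b sci = some sci' := by
      have : trajS b (t1 + i + 1) = (trajS b (t1 + i)).bind (stepS b) := rfl
      rw [show t1 + (i + 1) = t1 + i + 1 by omega] at hsci'
      rw [this, hsci] at hsci'
      simpa using hsci'
    rw [he_eq i (by omega) sci hsci, he_eq (i + 1) (by omega) sci' hsci',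
      step_corr, hstepS]
    rfl
  have hheads : ∀ i < p, ((trajS b (t1 + i)).getD initS).h ∈ segHeads b t1 t2 := by
    intro i hi
    obtain ⟨sci, hsci⟩ := Option.isSome_iff_exists.mp (hdef i (by omega))
    rw [hsci]
    exact mem_segHeads (by omega) hsci
  -- nonhalt from c1
  have hnon : ∀ s : ℕ, (stepsTM (tf b) s (toCfg c1)).isSome := by
    set δ : ℤ := c2.h - c1.h with hδdef
    by_cases hδ : 0 ≤ δ
    · rw [if_pos hδ, List.any_eq_true] at hC
      obtain ⟨m, _, hC⟩ := hC
      rw [Bool.and_eq_true, List.all_eq_true] at hC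
      obtain ⟨hguard, hagree⟩ := hC
      rw [decide_eq_true_eq] at hagree
      rw [← he0]
      have hA : AgreeGE δ m (toCfg c1) (toCfg c2) := by
        refine ⟨hq.symm, by show c2.h = c1.h + δ; omega, ?_⟩
        intro x hx
        show decide ((x + δ) ∈ c2.o) = decide (x ∈ c1.o)
        by_cases hU : x ∈ c1.o ∪ c2.o.image (fun y => y - δ)
        · have := hagree x hU hx
          simp only [this]
        · rw [Finset.mem_union, Finset.mem_image] at hU
          push_neg at hU
          have h1 : x ∉ c1.o := hU.1
          have h2 : x + δ ∉ c2.o := by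
            intro hmem
            exact absurd (by omega : x + δ - δ = x) (by
              intro _
              exact (hU.2 (x + δ) hmem) (by omega))
          simp [h1, h2]
      refine nonhalt_ge (m := m) hδ e p hppos hstep ?_ (by rw [he0, hep]; exact hA)
      intro i hi
      have hm := hguard _ (hheads i hi)
      rw [decide_eq_true_eq] at hm
      obtain ⟨sci, hsci⟩ := Option.isSome_iff_exists.mp (hdef i (by omega))
      rw [he_eq i (by omega) sci hsci]
      rw [hsci] at hm
      exact hm
    · rw [if_neg hδ, List.any_eq_true] at hC
      obtain ⟨M, _, hC⟩ := hC
      rw [Bool.and_eq_true, List.all_eq_true] at hC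
      obtain ⟨hguard, hagree⟩ := hC
      rw [decide_eq_true_eq] at hagree
      rw [← he0]
      have hA : AgreeLE δ M (toCfg c1) (toCfg c2) := by
        refine ⟨hq.symm, by show c2.h = c1.h + δ; omega, ?_⟩
        intro x hx
        show decide ((x + δ) ∈ c2.o) = decide (x ∈ c1.o)
        by_cases hU : x ∈ c1.o ∪ c2.o.image (fun y => y - δ)
        · have := hagree x hU hx
          simp only [this]
        · rw [Finset.mem_union, Finset.mem_image] at hU
          push_neg at hU
          have h1 : x ∉ c1.o := hU.1
          have h2 : x + δ ∉ c2.o := by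
            intro hmem
            exact absurd (by omega : x + δ - δ = x) (by
              intro _
              exact (hU.2 (x + δ) hmem) (by omega))
          simp [h1, h2]
      refine nonhalt_le (δ := δ) (M := M) (by omega) e p hppos hstep ?_ (by rw [he0, hep]; exact hA)
      intro i hi
      have hm := hguard _ (hheads i hi)
      rw [decide_eq_true_eq] at hm
      obtain ⟨sci, hsci⟩ := Option.isSome_iff_exists.mp (hdef i (by omega))
      rw [he_eq i (by omega) sci hsci]
      rw [hsci] at hm
      exact hm
  -- conclude: the machine never halts from the start
  intro s
  rcases Nat.le_total s t1 with hle | hge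
  · exact steps_isSome_of_le hle (by
      rw [traj_corr, htr1]; rfl)
  · obtain ⟨k, rfl⟩ : ∃ k, s = t1 + k := ⟨s - t1, by omega⟩
    rw [steps_add, traj_corr, htr1]
    simpa using hnon k

/-- Checker soundness: a machine passing the check only computes `1111` at count 4. -/
theorem main_sound (f : Fin 2 × Bool → Option T2) (w : List Bool) (t : ℕ)
    (hcomp : Computes f 0 w t) (hcnt : w.count true = 4) :
    w = List.replicate 4 true := by
  obtain ⟨c, hs, hh, htw⟩ := hcomp
  have hf : f = tf (f (0, false), f (0, true), f (1, false), f (1, true)) := tf_eq f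
  set b : Tbl := (f (0, false), f (0, true), f (1, false), f (1, true)) with hbdef
  rw [hf] at hs hh
  have hchk : check b = true := check_all _ _ _ _
  rw [check, Bool.or_eq_true, Bool.or_eq_true] at hchk
  rcases hchk with (hA | hH) | hC
  · exact absurd hh (by
      have := allSome_case hA (c.state, c.tape c.head)
      rw [Option.isSome_iff_ne_none] at this
      exact this)
  · exact halt_case hH hs hh hcnt htw
  · exfalso
    have hnone : stepsTM (tf b) (t + 1) (initCfg (0 : Fin 2)) = none := by
      rw [steps_succ', hs]
      simpa using halted_stepTM hh
    have := cert_case hC (t + 1)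
    rw [hnone] at this
    simp at this

end BB2Aux

namespace BB2Aux

/-! ### The champion machine, computing `1111` -/

def champ : Tbl :=
  (some (1, true, Dir.right), some (1, true, Dir.left), some (0, true, Dir.left), none)

def champC : SC :=
  ⟨1, -1, insert (-2) (insert (-1) (insert 0 (insert 1 (insert 0 (∅ : Finset ℤ)))))⟩

theorem champ_traj : trajS champ 5 = some champC := by rfl

theorem champ_computes : Computes (tf champ) 0 (List.replicate 4 true) 5 := by
  refine ⟨toCfg champC, ?_, ?_, ?_⟩
  · rw [traj_corr, champ_traj]; rfl
  · show tf champ (champC.q, champC.tape champC.h) = none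
    decide
  · refine ⟨-2, ?_, ?_, ?_⟩
    · intro k hk
      simp only [List.length_replicate] at hk
      interval_cases k <;> decide
    · intro j hj
      have hjm : j ∈ champC.o := by
        simpa [toCfg, SC.tape] using hj
      simp only [champC, Finset.mem_insert, Finset.notMem_empty] at hjm
      simp only [List.length_replicate]
      rcases hjm with rfl | rfl | rfl | rfl | rfl | h
      · constructor <;> norm_num
      · constructor <;> norm_num
      · constructor <;> norm_num
      · constructor <;> norm_num
      · constructor <;> norm_num
      · exact h.elim
    · exact fun _ => ⟨by decide, by decide⟩

end BB2Aux

/-- the Busy Beaver language at level 2 is `L_BB(2) = {1111}`: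
the only word computed by a halting Turing machine with at most 2 states whose
number of ones attains `BB(2) = 4` is the word `1111`. -/
theorem busy_beaver_language_2 :
    {w : List Bool |
        ∃ (f : Fin 2 × Bool → Option (Fin 2 × Bool × Dir)) (t : ℕ),
          Computes f 0 w t ∧ w.count true = 4} = {List.replicate 4 true} := by
  ext w
  simp only [Set.mem_setOf_eq, Set.mem_singleton_iff]
  constructor
  · rintro ⟨f, t, hcomp, hcnt⟩
    exact BB2Aux.main_sound f w t hcomp hcnt
  · rintro rfl
    exact ⟨BB2Aux.tf BB2Aux.champ, 5, BB2Aux.champ_computes, by decide⟩
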